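/- arXiv:2104.00003 — 2 statements merged into one kernel-verified Lean document; each statement's English description precedes it below -/
import Mathlib

section
/- (Convexity of the dynamical coherence measure.) Let C be a real-valued function on d×d complex matrices that is bounded on the set D of density matrices and convex, i.e. C(tρ + (1−t)σ) ≤ t·C(ρ) + (1−t)·C(σ) for all t ∈ [0,1] and density matrices ρ, σ. Then for all quantum channels Θ₁, Θ₂ and all t ∈ [0,1], 𝔠_C(t·Θ₁ + (1−t)·Θ₂) ≤ t·𝔠_C(Θ₁) + (1−t)·𝔠_C(Θ₂). -/
open Matrix ComplexOrder

/-- A density matrix: positive semidefinite with trace 1. -/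
def IsDensity (d : ℕ) (ρ : Matrix (Fin d) (Fin d) ℂ) : Prop :=
  ρ.PosSemidef ∧ ρ.trace = 1

/-- A quantum channel: a map admitting a Kraus decomposition. -/
def IsChannel (d : ℕ) (Λ : Matrix (Fin d) (Fin d) ℂ → Matrix (Fin d) (Fin d) ℂ) : Prop :=
  ∃ (m : ℕ) (K : Fin m → Matrix (Fin d) (Fin d) ℂ),
    (∀ ρ, Λ ρ = ∑ i, K i * ρ * (K i)ᴴ) ∧ (∑ i, (K i)ᴴ * K i) = 1

/-- A channel is an incoherent operation induced by the coherence measure `C` (CMIO for `C`)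
if it does not increase `C` on any density matrix. -/
def IsCMIO (d : ℕ) (C : Matrix (Fin d) (Fin d) ℂ → ℝ)
    (Λ : Matrix (Fin d) (Fin d) ℂ → Matrix (Fin d) (Fin d) ℂ) : Prop :=
  ∀ ρ, IsDensity d ρ → C (Λ ρ) ≤ C ρ

/-- `C` is bounded on the set of density matrices. -/
def BoundedOnD (d : ℕ) (C : Matrix (Fin d) (Fin d) ℂ → ℝ) : Prop :=
  ∃ M : ℝ, ∀ ρ, IsDensity d ρ → |C ρ| ≤ M

/-- `C` is convex on density matrices. -/
def ConvexOnD (d : ℕ) (C : Matrix (Fin d) (Fin d) ℂ → ℝ) : Prop :=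
  ∀ t : ℝ, t ∈ Set.Icc (0 : ℝ) 1 → ∀ ρ σ : Matrix (Fin d) (Fin d) ℂ,
    IsDensity d ρ → IsDensity d σ →
    C (t • ρ + (1 - t) • σ) ≤ t * C ρ + (1 - t) * C σ

/-- The power of the channel `Θ` over the channel `Λ`:
`P_C(Θ; Λ) = sup_{ρ ∈ D} (C(Θ(ρ)) − C(Λ(ρ)))`. -/
noncomputable def power (d : ℕ) (C : Matrix (Fin d) (Fin d) ℂ → ℝ)
    (Θ Λ : Matrix (Fin d) (Fin d) ℂ → Matrix (Fin d) (Fin d) ℂ) : ℝ :=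
  sSup ((fun ρ => C (Θ ρ) - C (Λ ρ)) '' {ρ | IsDensity d ρ})

/-- The dynamical coherence measure `𝔠_C(Θ) = inf_{Λ channel, CMIO for C} |P_C(Θ; Λ)|`. -/
noncomputable def dynCoh (d : ℕ) (C : Matrix (Fin d) (Fin d) ℂ → ℝ)
    (Θ : Matrix (Fin d) (Fin d) ℂ → Matrix (Fin d) (Fin d) ℂ) : ℝ :=
  sInf ((fun Λ => |power d C Θ Λ|) '' {Λ | IsChannel d Λ ∧ IsCMIO d C Λ})

/-
For every density-preserving map `Ξ` the infimum defining `𝔠_C(Ξ)` is attained at the identity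
channel, which is trivially a CMIO: a CMIO `Λ` satisfies `C(Λ ρ) ≤ C ρ`, so `P_C(Ξ; Λ) ≥ P_C(Ξ; id)`,
and `P_C(Ξ; id) ≥ 0` because `C(Ξ ρ) - C ρ` is almost nonnegative at any `ρ` almost minimizing `C`.
Hence `𝔠_C(Ξ) = sup_ρ (C(Ξ ρ) - C ρ)`, which is convex in `Ξ` because `C` is.
-/

variable {d : ℕ} {C : Matrix (Fin d) (Fin d) ℂ → ℝ}
  {Θ Λ : Matrix (Fin d) (Fin d) ℂ → Matrix (Fin d) (Fin d) ℂ}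

lemma IsDensity.convexComb {ρ σ : Matrix (Fin d) (Fin d) ℂ} {t : ℝ}
    (ht : t ∈ Set.Icc (0 : ℝ) 1) (hρ : IsDensity d ρ) (hσ : IsDensity d σ) :
    IsDensity d (t • ρ + (1 - t) • σ) := by
  refine ⟨(hρ.1.smul ht.1).add (hσ.1.smul (sub_nonneg.2 ht.2)), ?_⟩
  rw [trace_add, trace_smul, trace_smul, hρ.2, hσ.2]
  simp [Complex.real_smul]

lemma IsChannel.mapsTo_isDensity (hΛ : IsChannel d Λ) :
    Set.MapsTo Λ {ρ | IsDensity d ρ} {ρ | IsDensity d ρ} := by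
  obtain ⟨m, K, hK, hnorm⟩ := hΛ
  intro ρ hρ
  change IsDensity d (Λ ρ)
  rw [hK]
  refine ⟨Finset.sum_induction _ PosSemidef (fun _ _ => .add) .zero
    fun i _ => hρ.1.mul_mul_conjTranspose_same (K i), ?_⟩
  have hcycle : ∀ i, (K i * ρ * (K i)ᴴ).trace = ((K i)ᴴ * K i * ρ).trace := fun i => by
    rw [trace_mul_cycle, mul_assoc]
  simp_rw [trace_sum, hcycle, ← trace_sum, ← Finset.sum_mul, hnorm, one_mul, hρ.2]

lemma isChannel_id : IsChannel d id :=
  ⟨1, fun _ => 1, fun ρ => by simp, by simp⟩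

lemma isCMIO_id : IsCMIO d C id := fun _ _ => le_rfl

lemma bddAbove_power_image (hb : BoundedOnD d C)
    (hΘ : Set.MapsTo Θ {ρ | IsDensity d ρ} {ρ | IsDensity d ρ})
    (hΛ : Set.MapsTo Λ {ρ | IsDensity d ρ} {ρ | IsDensity d ρ}) :
    BddAbove ((fun ρ => C (Θ ρ) - C (Λ ρ)) '' {ρ | IsDensity d ρ}) := by
  obtain ⟨M, hM⟩ := hb
  refine ⟨M + M, ?_⟩
  rintro _ ⟨ρ, hρ, rfl⟩
  linarith [(abs_le.mp (hM _ (hΘ hρ))).2, (abs_le.mp (hM _ (hΛ hρ))).1]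

lemma sub_le_power (hb : BoundedOnD d C)
    (hΘ : Set.MapsTo Θ {ρ | IsDensity d ρ} {ρ | IsDensity d ρ})
    (hΛ : Set.MapsTo Λ {ρ | IsDensity d ρ} {ρ | IsDensity d ρ})
    {ρ : Matrix (Fin d) (Fin d) ℂ} (hρ : IsDensity d ρ) :
    C (Θ ρ) - C (Λ ρ) ≤ power d C Θ Λ :=
  le_csSup (bddAbove_power_image hb hΘ hΛ) ⟨ρ, hρ, rfl⟩

lemma sub_le_power_id (hb : BoundedOnD d C)
    (hΘ : Set.MapsTo Θ {ρ | IsDensity d ρ} {ρ | IsDensity d ρ})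
    {ρ : Matrix (Fin d) (Fin d) ℂ} (hρ : IsDensity d ρ) :
    C (Θ ρ) - C ρ ≤ power d C Θ id :=
  sub_le_power hb hΘ (Set.mapsTo_id _) hρ

lemma power_id_nonneg (hb : BoundedOnD d C)
    (hΘ : Set.MapsTo Θ {ρ | IsDensity d ρ} {ρ | IsDensity d ρ}) :
    0 ≤ power d C Θ id := by
  rcases Set.eq_empty_or_nonempty {ρ | IsDensity d ρ} with hD | hD
  · -- no density matrices exist when `d = 0`, and then `power` is the junk value `sSup ∅ = 0`
    simp [power, hD]
  refine le_of_forall_pos_le_add fun ε hε => ?_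
  obtain ⟨M, hM⟩ := hb
  have hC_bdd : BddBelow (C '' {ρ | IsDensity d ρ}) :=
    ⟨-M, by rintro _ ⟨ρ, hρ, rfl⟩; exact (abs_le.mp (hM ρ hρ)).1⟩
  obtain ⟨_, ⟨ρ, hρ, rfl⟩, hρ_min⟩ := Real.lt_sInf_add_pos (hD.image C) hε
  have hΘρ : sInf (C '' {ρ | IsDensity d ρ}) ≤ C (Θ ρ) := csInf_le hC_bdd ⟨Θ ρ, hΘ hρ, rfl⟩
  linarith [sub_le_power_id ⟨M, hM⟩ hΘ hρ]

lemma power_id_le_power (hb : BoundedOnD d C)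
    (hΘ : Set.MapsTo Θ {ρ | IsDensity d ρ} {ρ | IsDensity d ρ})
    (hΛ : Set.MapsTo Λ {ρ | IsDensity d ρ} {ρ | IsDensity d ρ}) (hΛC : IsCMIO d C Λ) :
    power d C Θ id ≤ power d C Θ Λ := by
  rcases Set.eq_empty_or_nonempty {ρ | IsDensity d ρ} with hD | hD
  · simp [power, hD]
  refine csSup_le (hD.image _) ?_
  rintro _ ⟨ρ, hρ, rfl⟩
  change C (Θ ρ) - C ρ ≤ _
  linarith [hΛC ρ hρ, sub_le_power hb hΘ hΛ hρ]

lemma dynCoh_eq_power_id (hb : BoundedOnD d C)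
    (hΘ : Set.MapsTo Θ {ρ | IsDensity d ρ} {ρ | IsDensity d ρ}) :
    dynCoh d C Θ = power d C Θ id := by
  have hid : |power d C Θ id| ∈
      (fun Λ => |power d C Θ Λ|) '' {Λ | IsChannel d Λ ∧ IsCMIO d C Λ} :=
    ⟨id, ⟨isChannel_id, isCMIO_id⟩, rfl⟩
  rw [← abs_of_nonneg (power_id_nonneg hb hΘ)]
  refine le_antisymm (csInf_le ⟨0, ?_⟩ hid) (le_csInf ⟨_, hid⟩ ?_)
  · rintro _ ⟨Λ, -, rfl⟩
    exact abs_nonneg _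
  · rintro _ ⟨Λ, ⟨hΛ, hΛC⟩, rfl⟩
    rw [abs_of_nonneg (power_id_nonneg hb hΘ)]
    exact (power_id_le_power hb hΘ hΛ.mapsTo_isDensity hΛC).trans (le_abs_self _)

lemma power_id_convexComb_le (hb : BoundedOnD d C) (hconv : ConvexOnD d C)
    {Θ₁ Θ₂ : Matrix (Fin d) (Fin d) ℂ → Matrix (Fin d) (Fin d) ℂ}
    (hΘ₁ : Set.MapsTo Θ₁ {ρ | IsDensity d ρ} {ρ | IsDensity d ρ})
    (hΘ₂ : Set.MapsTo Θ₂ {ρ | IsDensity d ρ} {ρ | IsDensity d ρ})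
    {t : ℝ} (ht : t ∈ Set.Icc (0 : ℝ) 1) :
    power d C (fun ρ => t • Θ₁ ρ + (1 - t) • Θ₂ ρ) id ≤
      t * power d C Θ₁ id + (1 - t) * power d C Θ₂ id := by
  have h₁ := power_id_nonneg hb hΘ₁
  have h₂ := power_id_nonneg hb hΘ₂
  have h1t : 0 ≤ 1 - t := sub_nonneg.2 ht.2
  refine Real.sSup_le ?_ (add_nonneg (mul_nonneg ht.1 h₁) (mul_nonneg h1t h₂))
  rintro _ ⟨ρ, hρ, rfl⟩
  change C (t • Θ₁ ρ + (1 - t) • Θ₂ ρ) - C ρ ≤ _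
  have hle₁ := mul_le_mul_of_nonneg_left (sub_le_power_id hb hΘ₁ hρ) ht.1
  have hle₂ := mul_le_mul_of_nonneg_left (sub_le_power_id hb hΘ₂ hρ) h1t
  linarith [hconv t ht _ _ (hΘ₁ hρ) (hΘ₂ hρ)]

theorem stmt7 (d : ℕ) (C : Matrix (Fin d) (Fin d) ℂ → ℝ)
    (hb : BoundedOnD d C) (hconv : ConvexOnD d C)
    (Θ₁ Θ₂ : Matrix (Fin d) (Fin d) ℂ → Matrix (Fin d) (Fin d) ℂ)
    (hΘ₁ : IsChannel d Θ₁) (hΘ₂ : IsChannel d Θ₂)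
    (t : ℝ) (ht : t ∈ Set.Icc (0 : ℝ) 1) :
    dynCoh d C (fun ρ => t • Θ₁ ρ + (1 - t) • Θ₂ ρ) ≤
      t * dynCoh d C Θ₁ + (1 - t) * dynCoh d C Θ₂ := by
  have hΘ₁D := hΘ₁.mapsTo_isDensity
  have hΘ₂D := hΘ₂.mapsTo_isDensity
  have hΘD : Set.MapsTo (fun ρ => t • Θ₁ ρ + (1 - t) • Θ₂ ρ)
      {ρ | IsDensity d ρ} {ρ | IsDensity d ρ} :=
    fun ρ hρ => IsDensity.convexComb ht (hΘ₁D hρ) (hΘ₂D hρ)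
  rw [dynCoh_eq_power_id hb hΘD, dynCoh_eq_power_id hb hΘ₁D, dynCoh_eq_power_id hb hΘ₂D]
  exact power_id_convexComb_le hb hconv hΘ₁D hΘ₂D ht
end

section
/- Let ψ, ψ' be orthonormal vectors in ℂ², let λ ∈ [0,1], and set ρ = λ|ψ⟩⟨ψ| + (1−λ)|ψ'⟩⟨ψ'|. Then C_{E,r}(ρ) ≥ 1, with equality if and only if ρ = I/2 (half the identity matrix). In particular, no qubit density matrix satisfies C_{E,r}(ρ) = 0, i.e. no POVM-based incoherent state for E exists. -/
open Matrix ComplexOrder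

/-- The POVM vectors `|φ_k⟩ = (|0⟩ + i^k |1⟩)/√2` for `k = 0,1,2,3`. -/
noncomputable def phiv (k : Fin 4) : Fin 2 → ℂ :=
  ![(1 : ℂ) / Real.sqrt 2, Complex.I ^ (k : ℕ) / Real.sqrt 2]

/-- The outer product `|ψ⟩⟨ψ|`. -/
def outer (ψ : Fin 2 → ℂ) : Matrix (Fin 2) (Fin 2) ℂ :=
  vecMulVec ψ (star ψ)

/-- The POVM outcome probabilities `p_k(ρ) = (1/2)⟨φ_k|ρ|φ_k⟩`. -/
noncomputable def pk (ρ : Matrix (Fin 2) (Fin 2) ℂ) (k : Fin 4) : ℝ :=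
  (star (phiv k) ⬝ᵥ ρ.mulVec (phiv k)).re / 2

/-- `-x log₂ x`, with the convention `0 log₂ 0 = 0`. -/
noncomputable def ent2 (x : ℝ) : ℝ := -(x * Real.logb 2 x)

/-- The Shannon entropy (base 2) of the POVM outcome distribution of `ρ`. -/
noncomputable def H4 (ρ : Matrix (Fin 2) (Fin 2) ℂ) : ℝ := ∑ k : Fin 4, ent2 (pk ρ k)

/-- The binary entropy `h(λ)` (base 2). -/
noncomputable def binEnt (l : ℝ) : ℝ := ent2 l + ent2 (1 - l)

/-- A qubit density matrix: positive semidefinite with trace 1. -/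
def IsDensity2 (ρ : Matrix (Fin 2) (Fin 2) ℂ) : Prop :=
  ρ.PosSemidef ∧ ρ.trace = 1

/-!
Since `ψ, ψ'` is an orthonormal basis, `ρ = (1 - λ) I + (2λ - 1) |ψ⟩⟨ψ|`: it is Hermitian of trace 1
with off-diagonal entry `c = (2λ - 1) ψ₀ ψ̄₁`, and `|c| ≤ |λ - 1/2|` because `|ψ₀ ψ₁| ≤ 1/2`.
The outcome probabilities are `(1/2 ± Re c)/2` and `(1/2 ± Im c)/2`, so
`H = 1 + (h(1/2 + Re c) + h(1/2 + Im c))/2`. Since `h(1/2 + v)` decreases in `|v|`, each of the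
two terms is at least `h(λ) = h(1/2 + (λ - 1/2))`. Equality forces `|Re c| = |Im c| = |λ - 1/2|`,
which together with `(Re c)² + (Im c)² ≤ (λ - 1/2)²` gives `λ = 1/2`, i.e. `ρ = I/2`.
-/

lemma ent2_eq_negMulLog_div (x : ℝ) : ent2 x = Real.negMulLog x / Real.log 2 := by
  rw [ent2, Real.negMulLog, Real.logb]; ring

lemma binEnt_eq_binEntropy_div (p : ℝ) : binEnt p = Real.binEntropy p / Real.log 2 := by
  rw [binEnt, ent2_eq_negMulLog_div, ent2_eq_negMulLog_div,
    Real.binEntropy_eq_negMulLog_add_negMulLog_one_sub, add_div]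

lemma ent2_half (q : ℝ) : ent2 (q / 2) = ent2 q / 2 + q / 2 := by
  rcases eq_or_ne q 0 with rfl | hq
  · simp [ent2]
  · rw [ent2, ent2, Real.logb_div hq two_ne_zero, Real.logb_self_eq_one one_lt_two]; ring

lemma ent2_half_add_ent2_half_sub (a : ℝ) :
    ent2 ((1 / 2 + a) / 2) + ent2 ((1 / 2 - a) / 2) = binEnt (1 / 2 + a) / 2 + 1 / 2 := by
  rw [ent2_half, ent2_half, binEnt, show (1 : ℝ) - (1 / 2 + a) = 1 / 2 - a by ring]
  ring

lemma binEnt_one_sub (p : ℝ) : binEnt (1 - p) = binEnt p := by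
  rw [binEnt, binEnt, sub_sub_cancel, add_comm]

lemma binEnt_strictMonoOn : StrictMonoOn binEnt (Set.Icc 0 (1 / 2)) := by
  intro a ha b hb hab
  rw [binEnt_eq_binEntropy_div, binEnt_eq_binEntropy_div]
  rw [one_div] at ha hb
  exact div_lt_div_of_pos_right (Real.binEntropy_strictMonoOn ha hb hab) (Real.log_pos one_lt_two)

lemma binEnt_half_add (v : ℝ) : binEnt (1 / 2 + v) = binEnt (1 / 2 - |v|) := by
  rcases abs_cases v with ⟨hv, -⟩ | ⟨hv, -⟩
  · rw [hv, ← binEnt_one_sub]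
    ring_nf
  · rw [hv, sub_neg_eq_add]

lemma binEnt_half_add_le_iff {u v : ℝ} (hu : |u| ≤ 1 / 2) (hv : |v| ≤ 1 / 2) :
    binEnt (1 / 2 + v) ≤ binEnt (1 / 2 + u) ↔ |u| ≤ |v| := by
  rw [binEnt_half_add, binEnt_half_add,
    binEnt_strictMonoOn.le_iff_le ⟨by linarith, by linarith [abs_nonneg v]⟩
      ⟨by linarith, by linarith [abs_nonneg u]⟩]
  constructor <;> intro h <;> linarith

lemma star_phiv_dotProduct_mulVec (M : Matrix (Fin 2) (Fin 2) ℂ) (k : Fin 4) :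
    star (phiv k) ⬝ᵥ M *ᵥ phiv k =
      (M 0 0 + M 1 1 + Complex.I ^ (k : ℕ) * M 0 1 + star (Complex.I ^ (k : ℕ)) * M 1 0) / 2 := by
  have hs : ((Real.sqrt 2 : ℝ) : ℂ) ^ 2 = 2 := by
    rw [← Complex.ofReal_pow, Real.sq_sqrt zero_le_two]; norm_num
  have hI : star (Complex.I ^ (k : ℕ)) * Complex.I ^ (k : ℕ) = 1 := by
    rw [star_pow, ← mul_pow, Complex.star_def, Complex.conj_I, neg_mul, Complex.I_mul_I, neg_neg,
      one_pow]
  simp only [phiv, dotProduct, mulVec, Fin.sum_univ_two, Pi.star_apply, Matrix.cons_val_zero,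
    Matrix.cons_val_one, Complex.star_def, map_div₀, map_one, Complex.conj_ofReal]
  rw [Complex.star_def] at hI
  field_simp
  linear_combination (M 1 1 * 2) * hI - (M 0 0 + M 0 1 * Complex.I ^ (k : ℕ)
    + starRingEnd ℂ (Complex.I ^ (k : ℕ)) * M 1 0 + M 1 1) * hs

lemma pk_eq_of_isHermitian {ρ : Matrix (Fin 2) (Fin 2) ℂ} (hH : ρ.IsHermitian)
    (htr : ρ.trace = 1) (k : Fin 4) :
    pk ρ k = (1 / 2 + (Complex.I ^ (k : ℕ) * ρ 0 1).re) / 2 := by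
  have h10 : ρ 1 0 = star (ρ 0 1) := (hH.apply 1 0).symm
  have hd : (ρ 0 0 + ρ 1 1).re = 1 := by
    rw [← Matrix.trace_fin_two, htr, Complex.one_re]
  rw [pk, star_phiv_dotProduct_mulVec, h10, ← star_mul', Complex.div_ofNat_re, Complex.add_re,
    Complex.add_re, hd, Complex.star_def, Complex.conj_re]
  ring

lemma H4_eq_of_isHermitian {ρ : Matrix (Fin 2) (Fin 2) ℂ} (hH : ρ.IsHermitian)
    (htr : ρ.trace = 1) :
    H4 ρ = 1 + (binEnt (1 / 2 + (ρ 0 1).re) + binEnt (1 / 2 + (ρ 0 1).im)) / 2 := by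
  rw [H4, Fin.sum_univ_four]
  simp only [pk_eq_of_isHermitian hH htr]
  norm_num [pow_succ, Complex.I_mul_I, ← sub_eq_add_neg]
  linarith [ent2_half_add_ent2_half_sub (ρ 0 1).re, ent2_half_add_ent2_half_sub (ρ 0 1).im]

lemma binEnt_le_avg {l : ℝ} {c : ℂ} (hl : |l - 1 / 2| ≤ 1 / 2) (hc : ‖c‖ ≤ |l - 1 / 2|) :
    binEnt l ≤ (binEnt (1 / 2 + c.re) + binEnt (1 / 2 + c.im)) / 2 := by
  have hre := (Complex.abs_re_le_norm c).trans hc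
  have him := (Complex.abs_im_le_norm c).trans hc
  have h1 := (binEnt_half_add_le_iff (hre.trans hl) hl).2 hre
  have h2 := (binEnt_half_add_le_iff (him.trans hl) hl).2 him
  rw [add_sub_cancel] at h1 h2
  linarith

lemma binEnt_eq_avg_iff {l : ℝ} {c : ℂ} (hl : |l - 1 / 2| ≤ 1 / 2) (hc : ‖c‖ ≤ |l - 1 / 2|) :
    binEnt l = (binEnt (1 / 2 + c.re) + binEnt (1 / 2 + c.im)) / 2 ↔ l = 1 / 2 := by
  refine ⟨fun h => ?_, ?_⟩
  · have hre := (Complex.abs_re_le_norm c).trans hc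
    have him := (Complex.abs_im_le_norm c).trans hc
    have h1 := (binEnt_half_add_le_iff (hre.trans hl) hl).2 hre
    have h2 := (binEnt_half_add_le_iff (him.trans hl) hl).2 him
    rw [add_sub_cancel] at h1 h2
    have hre' := (binEnt_half_add_le_iff hl (hre.trans hl)).1 (by rw [add_sub_cancel]; linarith)
    have him' := (binEnt_half_add_le_iff hl (him.trans hl)).1 (by rw [add_sub_cancel]; linarith)
    have hsq : c.re ^ 2 + c.im ^ 2 ≤ |l - 1 / 2| ^ 2 := by
      rw [← Complex.sq_norm_sub_sq_re c]
      nlinarith [norm_nonneg c]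
    have : |l - 1 / 2| = 0 := by
      nlinarith [sq_abs c.re, sq_abs c.im, abs_nonneg (l - 1 / 2)]
    linarith [abs_eq_zero.1 this]
  · rintro rfl
    have hc0 : c = 0 := norm_le_zero_iff.1 (by simpa using hc)
    simp [hc0]

lemma isHermitian_outer (ψ : Fin 2 → ℂ) : (outer ψ).IsHermitian :=
  IsHermitian.ext fun i j => by simp [outer, vecMulVec, mul_comm]

lemma trace_outer {ψ : Fin 2 → ℂ} (hψ : star ψ ⬝ᵥ ψ = 1) : (outer ψ).trace = 1 := by
  rw [outer, trace_vecMulVec, dotProduct_comm, hψ]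

lemma outer_mulVec (ψ φ : Fin 2 → ℂ) : outer ψ *ᵥ φ = (star ψ ⬝ᵥ φ) • ψ := by
  rw [outer, vecMulVec_mulVec, op_smul_eq_smul]

lemma sum_vecMulVec_star_eq_one {R n : Type*} [CommRing R] [StarRing R] [Fintype n]
    [DecidableEq n] (v : n → n → R) (hv : ∀ i j, star (v i) ⬝ᵥ v j = if i = j then 1 else 0) :
    ∑ i, vecMulVec (v i) (star (v i)) = 1 := by
  set U : Matrix n n R := (of v)ᵀ
  have hU : Uᴴ * U = 1 := by
    ext i j
    simpa [U, mul_apply, dotProduct, one_apply] using hv i j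
  have hU' : U * Uᴴ = 1 := mul_eq_one_comm.1 hU
  ext a b
  simpa [U, mul_apply, vecMulVec, Matrix.sum_apply] using congrFun (congrFun hU' a) b

lemma outer_add_outer_eq_one {ψ ψ' : Fin 2 → ℂ} (hψ : star ψ ⬝ᵥ ψ = 1)
    (hψ' : star ψ' ⬝ᵥ ψ' = 1) (horth : star ψ ⬝ᵥ ψ' = 0) : outer ψ + outer ψ' = 1 := by
  have horth' : star ψ' ⬝ᵥ ψ = 0 := by rw [star_dotProduct, horth, star_zero]
  simpa [outer, Fin.sum_univ_two] using sum_vecMulVec_star_eq_one ![ψ, ψ'] (by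
    intro i j; fin_cases i <;> fin_cases j <;> simp [hψ, hψ', horth, horth'])

lemma isHermitian_mixture (ψ ψ' : Fin 2 → ℂ) (l : ℝ) :
    (l • outer ψ + (1 - l) • outer ψ').IsHermitian :=
  ((isHermitian_outer ψ).smul (.all l)).add ((isHermitian_outer ψ').smul (.all (1 - l)))

lemma trace_mixture {ψ ψ' : Fin 2 → ℂ} (hψ : star ψ ⬝ᵥ ψ = 1) (hψ' : star ψ' ⬝ᵥ ψ' = 1)
    (l : ℝ) : (l • outer ψ + (1 - l) • outer ψ').trace = 1 := by
  rw [trace_add, trace_smul, trace_smul, trace_outer hψ, trace_outer hψ']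
  simp

lemma mixture_apply_zero_one {ψ ψ' : Fin 2 → ℂ} (hψ : star ψ ⬝ᵥ ψ = 1)
    (hψ' : star ψ' ⬝ᵥ ψ' = 1) (horth : star ψ ⬝ᵥ ψ' = 0) (l : ℝ) :
    (l • outer ψ + (1 - l) • outer ψ') 0 1 = (2 * l - 1 : ℝ) * (ψ 0 * star (ψ 1)) := by
  have h := congrFun (congrFun (outer_add_outer_eq_one hψ hψ' horth) 0) 1
  simp only [Matrix.add_apply, one_apply_ne zero_ne_one, outer, vecMulVec_apply] at h
  simp only [Matrix.add_apply, Matrix.smul_apply, outer, vecMulVec_apply, Complex.real_smul]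
  push_cast
  linear_combination (1 - (l : ℂ)) * h

lemma norm_sq_add_norm_sq {ψ : Fin 2 → ℂ} (hψ : star ψ ⬝ᵥ ψ = 1) :
    ‖ψ 0‖ ^ 2 + ‖ψ 1‖ ^ 2 = 1 := by
  simp only [dotProduct, Fin.sum_univ_two, Pi.star_apply, Complex.star_def,
    Complex.conj_mul'] at hψ
  exact_mod_cast hψ

lemma norm_mixture_apply_zero_one_le {ψ ψ' : Fin 2 → ℂ} (hψ : star ψ ⬝ᵥ ψ = 1)
    (hψ' : star ψ' ⬝ᵥ ψ' = 1) (horth : star ψ ⬝ᵥ ψ' = 0) (l : ℝ) :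
    ‖(l • outer ψ + (1 - l) • outer ψ') 0 1‖ ≤ |l - 1 / 2| := by
  rw [mixture_apply_zero_one hψ hψ' horth, norm_mul, norm_mul, norm_star, Complex.norm_real,
    Real.norm_eq_abs, show 2 * l - 1 = 2 * (l - 1 / 2) by ring, abs_mul, abs_two]
  nlinarith [norm_sq_add_norm_sq hψ, sq_nonneg (‖ψ 0‖ - ‖ψ 1‖), abs_nonneg (l - 1 / 2)]

lemma mixture_mulVec_left {ψ ψ' : Fin 2 → ℂ} (hψ : star ψ ⬝ᵥ ψ = 1)
    (horth : star ψ ⬝ᵥ ψ' = 0) (l : ℝ) :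
    (l • outer ψ + (1 - l) • outer ψ') *ᵥ ψ = (l : ℂ) • ψ := by
  have horth' : star ψ' ⬝ᵥ ψ = 0 := by rw [star_dotProduct, horth, star_zero]
  rw [add_mulVec, smul_mulVec, smul_mulVec, outer_mulVec, outer_mulVec, hψ, horth', one_smul,
    zero_smul, smul_zero, add_zero, Complex.coe_smul]

lemma mixture_eq_half_smul_one_iff {ψ ψ' : Fin 2 → ℂ} (hψ : star ψ ⬝ᵥ ψ = 1)
    (hψ' : star ψ' ⬝ᵥ ψ' = 1) (horth : star ψ ⬝ᵥ ψ' = 0) (l : ℝ) :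
    l • outer ψ + (1 - l) • outer ψ' = (1 / 2 : ℂ) • (1 : Matrix (Fin 2) (Fin 2) ℂ) ↔
      l = 1 / 2 := by
  refine ⟨fun h => ?_, fun hl => ?_⟩
  · have hψ0 : ψ ≠ 0 := by rintro rfl; simp at hψ
    have := mixture_mulVec_left hψ horth l
    rw [h, smul_mulVec, one_mulVec, ← sub_eq_zero, ← sub_smul, smul_eq_zero] at this
    exact Complex.ofReal_injective (by push_cast; linear_combination -this.resolve_right hψ0)
  · rw [hl, show (1 : ℝ) - 1 / 2 = 1 / 2 by norm_num, ← smul_add,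
      outer_add_outer_eq_one hψ hψ' horth]
    norm_num [← Complex.coe_smul]

theorem stmt14 (ψ ψ' : Fin 2 → ℂ) (hψ : star ψ ⬝ᵥ ψ = 1) (hψ' : star ψ' ⬝ᵥ ψ' = 1)
    (horth : star ψ ⬝ᵥ ψ' = 0) (l : ℝ) (hl : l ∈ Set.Icc (0 : ℝ) 1)
    (ρ : Matrix (Fin 2) (Fin 2) ℂ) (hρ : ρ = l • outer ψ + (1 - l) • outer ψ') :
    (1 ≤ H4 ρ - binEnt l ∧
      (H4 ρ - binEnt l = 1 ↔ ρ = (1 / 2 : ℂ) • (1 : Matrix (Fin 2) (Fin 2) ℂ))) ∧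
      H4 ρ - binEnt l ≠ 0 := by
  have hl' : |l - 1 / 2| ≤ 1 / 2 := abs_le.2 ⟨by linarith [hl.1], by linarith [hl.2]⟩
  have hc : ‖ρ 0 1‖ ≤ |l - 1 / 2| := hρ ▸ norm_mixture_apply_zero_one_le hψ hψ' horth l
  have hH : H4 ρ = 1 + (binEnt (1 / 2 + (ρ 0 1).re) + binEnt (1 / 2 + (ρ 0 1).im)) / 2 := by
    subst hρ
    exact H4_eq_of_isHermitian (isHermitian_mixture ψ ψ' l) (trace_mixture hψ hψ' l)
  have hge := binEnt_le_avg hl' hc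
  have heq : H4 ρ - binEnt l = 1 ↔ ρ = (1 / 2 : ℂ) • (1 : Matrix (Fin 2) (Fin 2) ℂ) := by
    rw [hρ, mixture_eq_half_smul_one_iff hψ hψ' horth, ← binEnt_eq_avg_iff hl' hc, ← hρ, hH]
    constructor <;> intro h <;> linarith
  exact ⟨⟨by linarith, heq⟩, by linarith⟩
end
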